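/- Let f be locally integrable on ℝ^p with ‖f‖_B < ∞. Then there is a constant C₂ such that for every δ ∈ (0,1) and every x̃ ∈ ℝ^p, ∫_{B(x̃, δ)} |f(x)| dx ≤ C₂ (1 + |x̃|)^p. Consequently there is C₃ < ∞ such that every ball of radius δ contains a point x' with |f(x')| ≤ C₃ δ^{-p} (1 + |x'|)^p. -/

import Mathlib

open MeasureTheory Filter

noncomputable section

def cube (p : ℕ) (T : ℝ) : Set (EuclideanSpace ℝ (Fin p)) :=
  {x | ∀ i, x i ∈ Set.Icc (-T) T}

def BNormFinite (p : ℕ) (f : EuclideanSpace ℝ (Fin p) → ℂ) : Prop :=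
  Filter.IsBoundedUnder (· ≤ ·) Filter.atTop
    (fun T : ℝ => (2*T)^(-(p:ℤ)) * ∫ x in cube p T, ‖f x‖)

/-!
A ball of radius `δ ≤ 1` about `x₀` lies in the cube of half-side `R (1 + ‖x₀‖)`, and for `R` large
the finiteness of the Besicovitch norm bounds the integral over that cube by a multiple of
`(2R)^p (1 + ‖x₀‖)^p`. For the pointwise bound, some point `x'` of the ball has `‖f x'‖` at most the
mean of `‖f‖` over the ball, whose volume is `δ^p vol(B(0,1))`, and `1 + ‖x₀‖ ≤ 2 (1 + ‖x'‖)`.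
-/

open Metric

theorem one_add_norm_le_two_mul_of_mem_ball {E : Type*} [SeminormedAddGroup E] {x y : E} {r : ℝ}
    (hx : x ∈ ball y r) (hr : r ≤ 1) : 1 + ‖y‖ ≤ 2 * (1 + ‖x‖) := by
  have := norm_lt_of_mem_ball (mem_ball_comm.mp hx)
  linarith [norm_nonneg x]

theorem exists_mem_ball_norm_le_integral_div {E F : Type*} [NormedAddCommGroup E]
    [NormedSpace ℝ E] [MeasurableSpace E] [BorelSpace E] [FiniteDimensional ℝ E]
    [NormedAddCommGroup F] {μ : Measure E} [μ.IsAddHaarMeasure] {f : E → F}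
    (hf : LocallyIntegrable f μ) (x₀ : E) {r : ℝ} (hr : 0 < r) :
    ∃ x ∈ ball x₀ r, ‖f x‖ ≤
      (∫ x in ball x₀ r, ‖f x‖ ∂μ) / (r ^ Module.finrank ℝ E * μ.real (ball 0 1)) := by
  have hball : μ.real (ball x₀ r) = r ^ Module.finrank ℝ E * μ.real (ball 0 1) := by
    rw [Measure.real, Measure.real, Measure.addHaar_ball_of_pos μ x₀ hr, ENNReal.toReal_mul,
      ENNReal.toReal_ofReal (by positivity)]
  have hint : IntegrableOn (fun x => ‖f x‖) (ball x₀ r) μ :=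
    ((hf.integrableOn_isCompact (isCompact_closedBall x₀ r)).mono_set
      ball_subset_closedBall).norm
  obtain ⟨x, hx, hle⟩ := exists_le_setAverage (measure_ball_pos μ x₀ hr).ne'
    measure_ball_lt_top.ne hint
  refine ⟨x, hx, hle.trans_eq ?_⟩
  rw [setAverage_eq, smul_eq_mul, hball, inv_mul_eq_div]

section

variable {p : ℕ}

theorem cube_mono {S T : ℝ} (h : S ≤ T) : cube p S ⊆ cube p T :=
  fun _ hx i => ⟨(neg_le_neg h).trans (hx i).1, (hx i).2.trans h⟩

theorem isCompact_cube (T : ℝ) : IsCompact (cube p T) := by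
  have : cube p T = (EuclideanSpace.equiv (Fin p) ℝ).symm ''
      Set.univ.pi fun _ => Set.Icc (-T) T := by
    rw [ContinuousLinearEquiv.image_symm_eq_preimage]
    ext x
    simp only [cube, Set.mem_ofPred_eq, Set.mem_preimage, Set.mem_univ_pi]
    rfl
  rw [this]
  exact (isCompact_univ_pi fun _ => isCompact_Icc).image
    (EuclideanSpace.equiv (Fin p) ℝ).symm.continuous

theorem ball_subset_cube (x₀ : EuclideanSpace ℝ (Fin p)) (r : ℝ) :
    ball x₀ r ⊆ cube p (‖x₀‖ + r) := fun x hx i =>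
  abs_le.mp ((PiLp.norm_apply_le x i).trans (norm_lt_of_mem_ball hx).le)

variable {f : EuclideanSpace ℝ (Fin p) → ℂ}

theorem BNormFinite.exists_integral_cube_le (hB : BNormFinite p f) :
    ∃ M R : ℝ, 0 ≤ M ∧ 1 ≤ R ∧ ∀ T ≥ R, ∫ x in cube p T, ‖f x‖ ≤ M * (2 * T) ^ p := by
  obtain ⟨M, hM⟩ := hB
  obtain ⟨T₀, hT₀⟩ := eventually_atTop.mp (eventually_map.mp hM)
  have hbound : ∀ T ≥ max T₀ 1, ∫ x in cube p T, ‖f x‖ ≤ M * (2 * T) ^ p := by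
    intro T hT
    have h2T : 0 < (2 * T) ^ p := pow_pos (by linarith [le_of_max_le_right hT]) p
    have hmean := hT₀ T (le_of_max_le_left hT)
    rwa [zpow_neg, zpow_natCast, inv_mul_le_iff₀ h2T, mul_comm] at hmean
  refine ⟨M, max T₀ 1, ?_, le_max_right _ _, hbound⟩
  have hnonneg : 0 ≤ (2 * max T₀ 1) ^ (-(p : ℤ)) * ∫ x in cube p (max T₀ 1), ‖f x‖ :=
    mul_nonneg (zpow_nonneg (by positivity) _) (integral_nonneg fun _ => norm_nonneg _)
  exact hnonneg.trans (hT₀ (max T₀ 1) (le_max_left _ _))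

theorem BNormFinite.exists_integral_ball_le (hloc : LocallyIntegrable f volume)
    (hB : BNormFinite p f) :
    ∃ C, 0 ≤ C ∧ ∀ δ ≤ 1, ∀ x₀ : EuclideanSpace ℝ (Fin p),
      ∫ x in ball x₀ δ, ‖f x‖ ≤ C * (1 + ‖x₀‖) ^ p := by
  obtain ⟨M, R, hM, hR, hMR⟩ := hB.exists_integral_cube_le
  refine ⟨M * (2 * R) ^ p, by positivity, fun δ hδ x₀ => ?_⟩
  set T := R * (1 + ‖x₀‖) with hT
  have hsub : ball x₀ δ ⊆ cube p T := (ball_subset_cube x₀ δ).trans <|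
    cube_mono (by nlinarith [norm_nonneg x₀])
  calc ∫ x in ball x₀ δ, ‖f x‖
      ≤ ∫ x in cube p T, ‖f x‖ :=
        setIntegral_mono_set (hloc.integrableOn_isCompact (isCompact_cube T)).norm
          (ae_of_all _ fun _ => norm_nonneg _) hsub.eventuallyLE
    _ ≤ M * (2 * T) ^ p := hMR T (le_mul_of_one_le_right (by linarith) (by simp))
    _ = M * (2 * R) ^ p * (1 + ‖x₀‖) ^ p := by rw [hT, ← mul_assoc, mul_pow]; ring

end

/-- local integral bounds and existence of points of polynomial
growth for functions with finite Besicovitch norm. -/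
theorem local_bounds_of_BNorm_finite (p : ℕ) (f : EuclideanSpace ℝ (Fin p) → ℂ)
    (hloc : LocallyIntegrable f volume) (hB : BNormFinite p f) :
    (∃ C₂ : ℝ, ∀ δ ∈ Set.Ioo (0:ℝ) 1, ∀ x₀ : EuclideanSpace ℝ (Fin p),
      (∫ x in Metric.ball x₀ δ, ‖f x‖) ≤ C₂ * (1 + ‖x₀‖)^p) ∧
    (∃ C₃ : ℝ, ∀ δ ∈ Set.Ioo (0:ℝ) 1, ∀ x₀ : EuclideanSpace ℝ (Fin p),
      ∃ x' ∈ Metric.ball x₀ δ, ‖f x'‖ ≤ C₃ * δ^(-(p:ℤ)) * (1 + ‖x'‖)^p) := by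
  obtain ⟨C, hC, hball⟩ := hB.exists_integral_ball_le hloc
  set v := volume.real (ball (0 : EuclideanSpace ℝ (Fin p)) 1)
  have hv : 0 < v := ENNReal.toReal_pos (measure_ball_pos _ _ one_pos).ne' measure_ball_lt_top.ne
  refine ⟨⟨C, fun δ hδ x₀ => hball δ hδ.2.le x₀⟩, C * 2 ^ p / v, fun δ hδ x₀ => ?_⟩
  obtain ⟨x', hx', hfx'⟩ := exists_mem_ball_norm_le_integral_div hloc x₀ hδ.1
  rw [finrank_euclideanSpace_fin] at hfx'
  refine ⟨x', hx', hfx'.trans ?_⟩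
  have hδp : 0 < δ ^ p := pow_pos hδ.1 p
  calc (∫ x in ball x₀ δ, ‖f x‖) / (δ ^ p * v)
      ≤ C * (2 * (1 + ‖x'‖)) ^ p / (δ ^ p * v) := by
        gcongr
        refine (hball δ hδ.2.le x₀).trans ?_
        gcongr
        exact one_add_norm_le_two_mul_of_mem_ball hx' hδ.2.le
    _ = C * 2 ^ p / v * δ ^ (-(p : ℤ)) * (1 + ‖x'‖) ^ p := by
        rw [zpow_neg, zpow_natCast, mul_pow]
        field_simp

end
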